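/- arXiv:2404.14323 — 5 statements merged into one kernel-verified Lean document; each statement's English description precedes it below -/
import Mathlib

section
/- Two equivalent formulations of robustness of coherence: for any density matrix ρ on ℂ^d, min{ s ≥ 0 : ∃ density τ with (ρ+sτ)/(1+s) incoherent } = min{ λ : ρ ≤ λσ for some incoherent density matrix σ } − 1. -/
open Matrix ComplexOrder

/-- A density matrix: positive semidefinite with unit trace. -/
def IsDensity {n : Type*} [Fintype n] [DecidableEq n] (ρ : Matrix n n ℂ) : Prop :=
  ρ.PosSemidef ∧ ρ.trace = 1

/-- Robustness of coherence, mixture form: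
`min{ s ≥ 0 : ∃ density τ with (ρ + sτ)/(1+s) incoherent }`. -/
noncomputable def CRob {n : Type*} [Fintype n] [DecidableEq n] (ρ : Matrix n n ℂ) : ℝ :=
  sInf {s : ℝ | 0 ≤ s ∧ ∃ τ : Matrix n n ℂ, IsDensity τ ∧
    (((1 + s : ℝ) : ℂ)⁻¹ • (ρ + (s : ℂ) • τ)).IsDiag}

/-- Robustness of coherence, dominance form:
`min{ λ : ρ ≤ λσ for some incoherent density matrix σ }`. -/
noncomputable def CDom {n : Type*} [Fintype n] [DecidableEq n] (ρ : Matrix n n ℂ) : ℝ :=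
  sInf {l : ℝ | ∃ σ : Matrix n n ℂ, IsDensity σ ∧ σ.IsDiag ∧
    ((l : ℂ) • σ - ρ).PosSemidef}



lemma smul_psd {d : ℕ} (c : ℝ) (hc : 0 ≤ c) {M : Matrix (Fin d) (Fin d) ℂ}
    (hM : M.PosSemidef) : ((c : ℂ) • M).PosSemidef := by
  rw [posSemidef_iff_dotProduct_mulVec]
  constructor
  · unfold Matrix.IsHermitian
    rw [conjTranspose_smul, hM.1.eq]
    congr 1
    simp [Complex.star_def]
  · intro x
    rw [smul_mulVec, dotProduct_smul, smul_eq_mul]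
    exact mul_nonneg (Complex.zero_le_real.mpr hc) (hM.dotProduct_mulVec_nonneg x)

lemma psd_trace_nonneg {d : ℕ} {M : Matrix (Fin d) (Fin d) ℂ}
    (hM : M.PosSemidef) : 0 ≤ M.trace := by
  rw [Matrix.trace]
  refine Finset.sum_nonneg fun i _ => ?_
  have := hM.dotProduct_mulVec_nonneg (Pi.single i 1)
  simpa [dotProduct, Pi.single_apply] using this

lemma one_sub_psd {d : ℕ} {ρ : Matrix (Fin d) (Fin d) ℂ} (h : ρ.PosSemidef)
    (htr : ρ.trace = 1) : ((1 : Matrix (Fin d) (Fin d) ℂ) - ρ).PosSemidef := by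
  have hH := h.1
  set U : Matrix (Fin d) (Fin d) ℂ := (hH.eigenvectorUnitary : Matrix (Fin d) (Fin d) ℂ) with hUdef
  have hU : U * star U = 1 := mem_unitaryGroup_iff.mp hH.eigenvectorUnitary.2
  have hU' : star U * U = 1 := mem_unitaryGroup_iff'.mp hH.eigenvectorUnitary.2
  have hspec := hH.spectral_theorem
  rw [Unitary.conjStarAlgAut_apply, ← hUdef] at hspec
  have hsum : ∑ i, hH.eigenvalues i = 1 := by
    have h2 : ρ.trace = ((∑ i, hH.eigenvalues i : ℝ) : ℂ) := by
      conv_lhs => rw [hspec]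
      rw [trace_mul_cycle, hU', one_mul, trace_diagonal]
      push_cast
      rfl
    rw [htr] at h2
    exact_mod_cast h2.symm
  have key : (1 : Matrix (Fin d) (Fin d) ℂ) - ρ =
      U * diagonal (fun i => ((1 - hH.eigenvalues i : ℝ) : ℂ)) * star U := by
    have hD : diagonal (fun i => ((1 - hH.eigenvalues i : ℝ) : ℂ)) =
        1 - diagonal (RCLike.ofReal ∘ hH.eigenvalues) := by
      rw [← diagonal_one, diagonal_sub]
      ext i
      push_cast
      rfl
    rw [hD, Matrix.mul_sub, Matrix.mul_one, Matrix.sub_mul, hU, ← hspec]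
  have : (diagonal (fun i => ((1 - hH.eigenvalues i : ℝ) : ℂ))).PosSemidef := by
    refine PosSemidef.diagonal fun i => ?_
    show (0:ℂ) ≤ _
    rw [Complex.zero_le_real, sub_nonneg, ← hsum]
    exact Finset.single_le_sum (f := hH.eigenvalues)
      (fun j _ => h.eigenvalues_nonneg j) (Finset.mem_univ i)
  rw [key, star_eq_conjTranspose]
  exact this.mul_mul_conjTranspose_same U

section Main

variable {d : ℕ} (ρ : Matrix (Fin d) (Fin d) ℂ)

theorem crob_eq_cdom_sub_one' (hρ : IsDensity ρ) : CRob ρ = CDom ρ - 1 := by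
  obtain ⟨hpsd, htr⟩ := hρ
  set S : Set ℝ := {s : ℝ | 0 ≤ s ∧ ∃ τ : Matrix (Fin d) (Fin d) ℂ, IsDensity τ ∧
    (((1 + s : ℝ) : ℂ)⁻¹ • (ρ + (s : ℂ) • τ)).IsDiag} with hSdef
  set T : Set ℝ := {l : ℝ | ∃ σ : Matrix (Fin d) (Fin d) ℂ, IsDensity σ ∧ σ.IsDiag ∧
    ((l : ℂ) • σ - ρ).PosSemidef} with hTdef
  have hd : 0 < d := by
    by_contra hd
    have : d = 0 := by omega
    subst this
    simp [Matrix.trace] at htr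
  -- l ≥ 1 on T
  have hT1 : ∀ l ∈ T, (1:ℝ) ≤ l := by
    rintro l ⟨σ, ⟨hσp, hσt⟩, hσd, hpos⟩
    have h1 : ((l:ℂ) • σ - ρ).trace = ((l - 1 : ℝ) : ℂ) := by
      rw [trace_sub, trace_smul, hσt, htr, smul_eq_mul, mul_one]
      push_cast; ring
    have := psd_trace_nonneg hpos
    rw [h1, Complex.zero_le_real] at this
    linarith
  -- S → T
  have hA : ∀ s ∈ S, s + 1 ∈ T := by
    rintro s ⟨hs0, τ, ⟨hτp, hτt⟩, hdiag⟩
    have h1s : (0:ℝ) < 1 + s := by linarith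
    have h1s' : ((1 + s : ℝ) : ℂ) ≠ 0 := by exact_mod_cast h1s.ne'
    refine ⟨((1 + s : ℝ) : ℂ)⁻¹ • (ρ + (s : ℂ) • τ), ⟨⟨?_, ?_⟩, hdiag, ?_⟩⟩
    · have := smul_psd (1+s)⁻¹ (by positivity) ((smul_psd s hs0 hτp).add hpsd)
      rw [add_comm ((s:ℂ) • τ)] at this
      convert this using 2
      push_cast; ring
    · rw [trace_smul, trace_add, trace_smul, htr, hτt, smul_eq_mul, smul_eq_mul]
      field_simp
      push_cast; ring
    · have : ((s + 1 : ℝ) : ℂ) • (((1 + s : ℝ) : ℂ)⁻¹ • (ρ + (s : ℂ) • τ)) - ρ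
          = (s : ℂ) • τ := by
        rw [smul_smul]
        rw [show ((s + 1 : ℝ) : ℂ) = ((1 + s : ℝ) : ℂ) by push_cast; ring,
          mul_inv_cancel₀ h1s', one_smul]
        abel
      rw [this]
      exact smul_psd s hs0 hτp
  -- T (strictly above 1) → S
  have hB : ∀ l ∈ T, 1 < l → l - 1 ∈ S := by
    rintro l ⟨σ, ⟨hσp, hσt⟩, hσd, hpos⟩ hl
    have hs0 : (0:ℝ) < l - 1 := by linarith
    have hlC : ((l:ℝ) : ℂ) ≠ 0 := by
      exact_mod_cast (by linarith : (0:ℝ) < l).ne'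
    have hsC : (((l - 1 : ℝ)) : ℂ) ≠ 0 := by exact_mod_cast hs0.ne'
    refine ⟨hs0.le, ((l - 1 : ℝ) : ℂ)⁻¹ • ((l : ℂ) • σ - ρ), ⟨⟨?_, ?_⟩, ?_⟩⟩
    · have := smul_psd (l-1)⁻¹ (by positivity) hpos
      convert this using 2
      push_cast; ring
    · rw [trace_smul, trace_sub, trace_smul, hσt, htr, smul_eq_mul, smul_eq_mul, mul_one]
      rw [show ((l:ℝ):ℂ) - 1 = ((l - 1 : ℝ) : ℂ) by push_cast; ring]
      exact inv_mul_cancel₀ hsC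
    · have key : (ρ + ((l - 1 : ℝ) : ℂ) • (((l - 1 : ℝ) : ℂ)⁻¹ • ((l : ℂ) • σ - ρ)))
          = (l : ℂ) • σ := by
        rw [smul_smul, mul_inv_cancel₀ hsC, one_smul]
        abel
      rw [key, smul_smul]
      have h1l : ((1 + (l - 1) : ℝ) : ℂ) = (l : ℂ) := by push_cast; ring
      rw [h1l, inv_mul_cancel₀ hlC, one_smul]
      exact hσd
  -- T is upward stable
  have hC : ∀ l ∈ T, ∀ ε : ℝ, 0 < ε → l + ε ∈ T := by
    rintro l ⟨σ, hσ, hσd, hpos⟩ ε hε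
    refine ⟨σ, hσ, hσd, ?_⟩
    have : ((l + ε : ℝ) : ℂ) • σ - ρ = ((l : ℂ) • σ - ρ) + (ε : ℂ) • σ := by
      push_cast; module
    rw [this]
    exact hpos.add (smul_psd ε hε.le hσ.1)
  -- T nonempty
  have hTne : T.Nonempty := by
    refine ⟨d, (d:ℂ)⁻¹ • 1, ⟨⟨?_, ?_⟩, ?_, ?_⟩⟩
    · have := smul_psd (d:ℝ)⁻¹ (by positivity) (Matrix.PosSemidef.one (n := Fin d) (R := ℂ))
      convert this using 2
      push_cast; ring
    · rw [trace_smul, trace_one, smul_eq_mul]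
      rw [Fintype.card_fin]
      field_simp
    · exact (Matrix.isDiag_one).smul _
    · have hdC : ((d:ℕ) : ℂ) ≠ 0 := by exact_mod_cast hd.ne'
      rw [smul_smul, show ((((d:ℕ):ℝ)):ℂ) = ((d:ℕ):ℂ) by push_cast; rfl,
        mul_inv_cancel₀ hdC, one_smul]
      exact one_sub_psd hpsd htr
  -- S nonempty
  have hSne : S.Nonempty := by
    obtain ⟨l, hl⟩ := hTne
    have hl1 := hT1 l hl
    have := hB (l + 1) (hC l hl 1 one_pos) (by linarith)
    exact ⟨l + 1 - 1, this⟩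
  have hSbdd : BddBelow S := ⟨0, fun s hs => hs.1⟩
  have hTbdd : BddBelow T := ⟨1, hT1⟩
  have hCRob : CRob ρ = sInf S := rfl
  have hCDom : CDom ρ = sInf T := rfl
  rw [hCRob, hCDom]
  have le1 : sInf T ≤ sInf S + 1 := by
    have : sInf T - 1 ≤ sInf S := le_csInf hSne fun s hs => by
      have := csInf_le hTbdd (hA s hs); linarith
    linarith
  have le2 : sInf S + 1 ≤ sInf T := by
    refine le_csInf hTne fun l hl => ?_
    have : sInf S ≤ l - 1 := by
      refine le_of_forall_pos_le_add fun ε hε => ?_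
      have hmem := hB (l + ε) (hC l hl ε hε) (by have := hT1 l hl; linarith)
      have := csInf_le hSbdd hmem
      linarith
    linarith
  linarith

end Main

/-- The two formulations of the robustness of coherence agree:
`min{ s ≥ 0 : (ρ+sτ)/(1+s) incoherent } = min{ λ : ρ ≤ λσ, σ incoherent density } − 1`. -/
theorem crob_eq_cdom_sub_one {d : ℕ} (ρ : Matrix (Fin d) (Fin d) ℂ)
    (hρ : IsDensity ρ) : CRob ρ = CDom ρ - 1 :=
  crob_eq_cdom_sub_one' ρ hρ
end

section
/- For any density matrix ρ on ℂ^d, ρ ≤ d·Δ(ρ) (where Δ(ρ) is the diagonal part of ρ); consequently the robustness of coherence satisfies C_R(ρ) ≤ d − 1. -/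
open Matrix ComplexOrder

/-- The dephasing map: keep only the diagonal entries of a matrix. -/
def dephase {n : Type*} [Fintype n] [DecidableEq n] (A : Matrix n n ℂ) : Matrix n n ℂ :=
  Matrix.of fun i j => if i = j then A i j else 0

/-- Robustness of coherence:
`C_R(ρ) = min{ λ : ρ ≤ λσ, σ incoherent density matrix } − 1`. -/
noncomputable def CR {n : Type*} [Fintype n] [DecidableEq n] (ρ : Matrix n n ℂ) : ℝ :=
  sInf {l : ℝ | ∃ σ : Matrix n n ℂ, IsDensity σ ∧ σ.IsDiag ∧
    ((l : ℂ) • σ - ρ).PosSemidef} - 1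

lemma myPSD_add {n : Type*} [Fintype n] {A B : Matrix n n ℂ}
    (hA : A.PosSemidef) (hB : B.PosSemidef) : (A + B).PosSemidef := by
  exact hA.add hB

lemma myPSD_sum {n : Type*} [Fintype n] {ι : Type*} (s : Finset ι)
    (f : ι → Matrix n n ℂ) (h : ∀ i ∈ s, (f i).PosSemidef) :
    (∑ i ∈ s, f i).PosSemidef := by
  classical
  induction s using Finset.induction_on with
  | empty => simpa using Matrix.PosSemidef.zero
  | insert _ _ hx ih =>
    rw [Finset.sum_insert hx]
    exact myPSD_add (h _ (Finset.mem_insert_self _ _))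
      (ih fun i hi => h i (Finset.mem_insert_of_mem hi))

lemma myPSD_diag_nonneg {n : Type*} [Fintype n] [DecidableEq n] {A : Matrix n n ℂ}
    (hA : A.PosSemidef) (i : n) : 0 ≤ A i i := by
  exact hA.diag_nonneg

lemma myPSD_trace_nonneg {n : Type*} [Fintype n] [DecidableEq n] {A : Matrix n n ℂ}
    (hA : A.PosSemidef) : 0 ≤ A.trace := by
  rw [Matrix.trace]
  exact Finset.sum_nonneg fun i _ => myPSD_diag_nonneg hA i

lemma geom_sum_root {d : ℕ} (hd : 0 < d) (i j : Fin d) (hij : i ≠ j) :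
    ∑ k ∈ Finset.range d,
      Complex.exp (2 * Real.pi * Complex.I * ((i:ℂ) - j) / d) ^ k = 0 := by
  set z := Complex.exp (2 * Real.pi * Complex.I * ((i:ℂ) - j) / d) with hz
  have hd0 : (d:ℂ) ≠ 0 := Nat.cast_ne_zero.mpr hd.ne'
  have hzd : z ^ d = 1 := by
    rw [hz, ← Complex.exp_nat_mul]
    have key : (d:ℂ) * (2 * Real.pi * Complex.I * ((i:ℂ) - j) / d)
        = (((i:ℤ) - (j:ℤ) : ℤ) : ℂ) * (2 * Real.pi * Complex.I) := by
      push_cast; field_simp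
    rw [key, Complex.exp_int_mul_two_pi_mul_I]
  have hz1 : z ≠ 1 := by
    intro h
    rw [hz, Complex.exp_eq_one_iff] at h
    obtain ⟨n, hn⟩ := h
    have hpi : (2 * Real.pi * Complex.I : ℂ) ≠ 0 := by
      simp [Real.pi_ne_zero, Complex.I_ne_zero]
    have h2 : (2 * Real.pi * Complex.I) * (((i:ℂ) - j) / d)
        = (2 * Real.pi * Complex.I) * n := by linear_combination hn
    have h3 : ((i:ℂ) - j) / d = n := mul_left_cancel₀ hpi h2
    rw [div_eq_iff hd0] at h3
    have hint : (i:ℤ) - j = n * d := by exact_mod_cast h3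
    have hi1 : (i:ℤ) < d := by exact_mod_cast i.isLt
    have hj1 : (j:ℤ) < d := by exact_mod_cast j.isLt
    have hne : (i:ℤ) ≠ j := by
      intro h'; exact hij (Fin.ext (by exact_mod_cast h'))
    rcases eq_or_ne n 0 with rfl | hn0
    · simp at hint; omega
    · have h1n : 1 ≤ |n| := Int.one_le_abs hn0
      have hd' : (0:ℤ) < d := by exact_mod_cast hd
      have habs : |(i:ℤ) - j| = |n| * d := by rw [hint, abs_mul]; simp
      have h4 : (d:ℤ) ≤ |n| * d := by nlinarith
      have h5 : |(i:ℤ) - j| < d := abs_lt.mpr ⟨by omega, by omega⟩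
      rw [habs] at h5; linarith
  rw [geom_sum_eq hz1, hzd]
  simp

/-- For any density matrix `ρ` on `ℂ^d`, `ρ ≤ d·Δ(ρ)`, and consequently
the robustness of coherence satisfies `C_R(ρ) ≤ d − 1`. -/
theorem le_dim_smul_dephase_and_cr_le {d : ℕ} (ρ : Matrix (Fin d) (Fin d) ℂ)
    (hρ : IsDensity ρ) :
    ((d : ℂ) • dephase ρ - ρ).PosSemidef ∧ CR ρ ≤ (d : ℝ) - 1 := by
  have hd : 0 < d := by
    rcases Nat.eq_zero_or_pos d with rfl | h
    · exfalso
      have h0 : ρ.trace = 0 := by simp [Matrix.trace]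
      rw [hρ.2] at h0
      exact one_ne_zero h0
    · exact h
  have hd0 : (d:ℂ) ≠ 0 := Nat.cast_ne_zero.mpr hd.ne'
  -- the phase unitaries
  set u : ℕ → Fin d → ℂ := fun k i => Complex.exp (2 * Real.pi * Complex.I * k * i / d) with hu
  set M : ℕ → Matrix (Fin d) (Fin d) ℂ :=
    fun k => Matrix.diagonal (u k) * ρ * (Matrix.diagonal (u k))ᴴ with hM
  have hMpsd : ∀ k, (M k).PosSemidef := fun k =>
    hρ.1.mul_mul_conjTranspose_same (Matrix.diagonal (u k))
  have hMentry : ∀ k i j, M k i j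
      = ρ i j * Complex.exp (2 * Real.pi * Complex.I * ((i:ℂ) - j) / d) ^ k := by
    intro k i j
    have h1 : M k i j = u k i * ρ i j * star (u k j) := by
      simp [hM, Matrix.diagonal_conjTranspose, Matrix.diagonal_mul, Matrix.mul_diagonal,
        mul_comm, mul_assoc, mul_left_comm]
    have hstar : star (u k j) = Complex.exp (-(2 * Real.pi * Complex.I * k * j / d)) := by
      simp only [hu, Complex.star_def, ← Complex.exp_conj]
      congr 1
      simp only [map_div₀, _root_.map_mul, Complex.conj_I, Complex.conj_ofReal, map_ofNat,
        Complex.conj_natCast]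
      ring
    have hui : u k i = Complex.exp (2 * Real.pi * Complex.I * k * i / d) := by simp [hu]
    rw [h1, hstar, hui, ← Complex.exp_nat_mul, mul_right_comm, ← Complex.exp_add,
      mul_comm (Complex.exp _) (ρ i j)]
    congr 1
    field_simp
    ring
  have hsum : ∑ k ∈ Finset.range d, M k = (d:ℂ) • dephase ρ := by
    ext i j
    rw [Matrix.sum_apply]
    simp only [hMentry]
    rw [← Finset.mul_sum]
    by_cases hij : i = j
    · subst hij
      simp [dephase, mul_comm]
    · rw [geom_sum_root hd i j hij]
      simp [dephase, hij]
  have hM0 : M 0 = ρ := by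
    have h1 : u 0 = fun _ => 1 := by funext i; simp [hu]
    have h2 : Matrix.diagonal (u 0) = 1 := by
      rw [h1]; ext i j; simp [Matrix.diagonal, Matrix.one_apply]
    show Matrix.diagonal (u 0) * ρ * (Matrix.diagonal (u 0))ᴴ = ρ
    rw [h2, Matrix.conjTranspose_one, one_mul, mul_one]
  have h0mem : (0:ℕ) ∈ Finset.range d := Finset.mem_range.mpr hd
  have hsplit := Finset.sum_erase_add (Finset.range d) M h0mem
  have heq : (d:ℂ) • dephase ρ - ρ = ∑ k ∈ (Finset.range d).erase 0, M k := by
    rw [← hsum, ← hsplit, hM0]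
    abel
  have key : ((d:ℂ) • dephase ρ - ρ).PosSemidef := by
    rw [heq]; exact myPSD_sum _ _ fun k _ => hMpsd k
  refine ⟨key, ?_⟩
  unfold CR
  have hdep : dephase ρ = Matrix.diagonal ρ.diag := by
    ext i j
    by_cases h : i = j <;> simp [dephase, Matrix.diagonal, Matrix.diag, h]
  have hmem : (d:ℝ) ∈ {l : ℝ | ∃ σ : Matrix (Fin d) (Fin d) ℂ, IsDensity σ ∧ σ.IsDiag ∧
      ((l : ℂ) • σ - ρ).PosSemidef} := by
    refine ⟨dephase ρ, ⟨?_, ?_⟩, ?_, ?_⟩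
    · rw [hdep]
      exact Matrix.posSemidef_diagonal_iff.mpr fun i => myPSD_diag_nonneg hρ.1 i
    · rw [hdep, Matrix.trace_diagonal]
      simpa [Matrix.trace] using hρ.2
    · rw [hdep]; exact Matrix.isDiag_diagonal _
    · have hc : (((d:ℝ):ℂ)) = (d:ℂ) := by norm_cast
      rw [hc]; exact key
  have hbdd : BddBelow {l : ℝ | ∃ σ : Matrix (Fin d) (Fin d) ℂ, IsDensity σ ∧ σ.IsDiag ∧
      ((l : ℂ) • σ - ρ).PosSemidef} := by
    refine ⟨1, fun l hl => ?_⟩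
    obtain ⟨σ, hσ, _, hpsd⟩ := hl
    have htr : (0:ℂ) ≤ ((l:ℂ) • σ - ρ).trace := myPSD_trace_nonneg hpsd
    rw [Matrix.trace_sub, Matrix.trace_smul, hσ.2, hρ.2] at htr
    have h1 : (0:ℂ) ≤ (((l - 1 : ℝ)):ℂ) := by
      push_cast
      simpa [smul_eq_mul, mul_one] using htr
    have := Complex.zero_le_real.mp h1
    linarith
  have := csInf_le hbdd hmem
  linarith
end

section
/- The robustness of coherence of the d-dimensional maximally coherent state equals d − 1: for |Ψ_d⟩ = (1/√d) Σ_{i=0}^{d-1} |i⟩, one has C_R(|Ψ_d⟩⟨Ψ_d|) = d − 1, equivalently C_max(Ψ_d) = log₂ d. -/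
open Matrix ComplexOrder

/-- The `d`-dimensional maximally coherent state `|Ψ_d⟩ = (1/√d) ∑ᵢ |i⟩`
(as a density matrix `|Ψ_d⟩⟨Ψ_d|`). -/
noncomputable def maxCoherent (d : ℕ) : Matrix (Fin d) (Fin d) ℂ :=
  Matrix.vecMulVec (fun _ => (1 / Real.sqrt d : ℂ)) (fun _ => (1 / Real.sqrt d : ℂ))

open Finset in
lemma aa_eq {d : ℕ} (hd : 0 < d) :
    (1 / (Real.sqrt d : ℂ)) * (1 / (Real.sqrt d : ℂ)) = ((d : ℂ))⁻¹ := by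
  have h : (Real.sqrt d) * Real.sqrt d = (d : ℝ) := Real.mul_self_sqrt (by positivity)
  rw [div_mul_div_comm, one_mul, one_div, ← Complex.ofReal_mul, h, Complex.ofReal_natCast]

open Finset in
lemma quad_rho {d : ℕ} (hd : 0 < d) (x : Fin d → ℂ) :
    star x ⬝ᵥ (maxCoherent d *ᵥ x) = ((d:ℂ))⁻¹ * (star (∑ i, x i) * (∑ i, x i)) := by
  unfold maxCoherent
  simp only [dotProduct, mulVec, vecMulVec, Matrix.of_apply, Pi.star_apply, dotProduct]
  rw [← Finset.sum_mul, ← Finset.mul_sum, ← star_sum, aa_eq hd]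
  ring

lemma herm_rho {d : ℕ} : (maxCoherent d).IsHermitian := by
  ext i j
  simp [maxCoherent, Matrix.conjTranspose_apply, vecMulVec, Complex.star_def, map_div₀,
    Complex.conj_ofReal]

open Finset in
lemma one_sub_rho_psd {d : ℕ} (hd : 0 < d) :
    ((1 : Matrix (Fin d) (Fin d) ℂ) - maxCoherent d).PosSemidef := by
  rw [Matrix.posSemidef_iff_dotProduct_mulVec]
  constructor
  · exact (Matrix.isHermitian_one).sub herm_rho
  intro x
  rw [Matrix.sub_mulVec, dotProduct_sub, Matrix.one_mulVec, quad_rho hd]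
  have key : ((d:ℝ))⁻¹ * Complex.normSq (∑ i, x i) ≤ ∑ i, Complex.normSq (x i) := by
    have h2 : ‖∑ i, x i‖ ≤ ∑ i, ‖x i‖ :=
      norm_sum_le _ _
    have h3 : (∑ i, ‖x i‖) ^ 2 ≤ (d:ℝ) * ∑ i, ‖x i‖ ^ 2 := by
      simpa using sq_sum_le_card_mul_sum_sq (s := (univ : Finset (Fin d)))
        (f := fun i => ‖x i‖)
    have h1 : Complex.normSq (∑ i, x i) ≤ (d:ℝ) * ∑ i, Complex.normSq (x i) := by
      calc Complex.normSq (∑ i, x i) = ‖∑ i, x i‖ ^ 2 := (Complex.sq_norm _).symm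
        _ ≤ (∑ i, ‖x i‖) ^ 2 := by
            apply pow_le_pow_left₀ (by positivity) h2
        _ ≤ (d:ℝ) * ∑ i, ‖x i‖ ^ 2 := h3
        _ = (d:ℝ) * ∑ i, Complex.normSq (x i) := by simp [Complex.sq_norm]
    rw [inv_mul_le_iff₀ (by exact_mod_cast hd)]
    exact h1
  have e1 : star x ⬝ᵥ x = ((∑ i, Complex.normSq (x i) : ℝ) : ℂ) := by
    simp [dotProduct, Complex.star_def, ← Complex.normSq_eq_conj_mul_self,
      Complex.ofReal_sum]
  have e2 : ((d:ℂ))⁻¹ * (star (∑ i, x i) * (∑ i, x i))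
      = (((d:ℝ))⁻¹ * Complex.normSq (∑ i, x i) : ℝ) := by
    rw [Complex.star_def, ← Complex.normSq_eq_conj_mul_self]
    push_cast
    ring
  rw [e1, e2, ← Complex.ofReal_sub, Complex.zero_le_real]
  linarith

open Finset in
lemma mem_S {d : ℕ} (hd : 0 < d) :
    (d : ℝ) ∈ {l : ℝ | ∃ σ : Matrix (Fin d) (Fin d) ℂ, IsDensity σ ∧ σ.IsDiag ∧
      ((l : ℂ) • σ - maxCoherent d).PosSemidef} := by
  have hdc : (d : ℂ) ≠ 0 := Nat.cast_ne_zero.mpr hd.ne'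
  refine ⟨Matrix.diagonal (fun _ => ((d:ℂ))⁻¹), ⟨?_, ?_⟩, ?_, ?_⟩
  · rw [Matrix.posSemidef_diagonal_iff]
    intro i
    have : ((d:ℂ))⁻¹ = (((d:ℝ))⁻¹ : ℝ) := by push_cast; ring
    rw [this, Complex.zero_le_real]
    positivity
  · simp [Matrix.trace_diagonal, mul_inv_cancel₀ hdc]
  · exact Matrix.isDiag_diagonal _
  · have : ((d:ℝ) : ℂ) • Matrix.diagonal (fun _ : Fin d => ((d:ℂ))⁻¹)
        = (1 : Matrix (Fin d) (Fin d) ℂ) := by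
      ext i j
      by_cases hij : i = j <;>
        simp [hij, Matrix.smul_apply, Matrix.diagonal_apply, Matrix.one_apply, smul_eq_mul,
          Complex.ofReal_natCast, mul_inv_cancel₀ hdc]
    rw [this]
    exact one_sub_rho_psd hd

open Finset in
lemma lower_bound {d : ℕ} (hd : 0 < d) (l : ℝ)
    (hl : l ∈ {l : ℝ | ∃ σ : Matrix (Fin d) (Fin d) ℂ, IsDensity σ ∧ σ.IsDiag ∧
      ((l : ℂ) • σ - maxCoherent d).PosSemidef}) : (d : ℝ) ≤ l := by
  obtain ⟨σ, ⟨hpsd, htr⟩, hdiag, hsub⟩ := hl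
  have hdc : (d : ℂ) ≠ 0 := Nat.cast_ne_zero.mpr hd.ne'
  set x : Fin d → ℂ := fun _ => 1 with hx
  have h := hsub.dotProduct_mulVec_nonneg x
  have hσ : star x ⬝ᵥ (σ *ᵥ x) = 1 := by
    have e : star x ⬝ᵥ (σ *ᵥ x) = ∑ i, ∑ j, σ i j := by
      simp [dotProduct, mulVec, hx]
    rw [e]
    have e2 : ∀ i : Fin d, ∑ j, σ i j = σ i i := by
      intro i
      apply Finset.sum_eq_single
      · intro j _ hj
        exact hdiag (Ne.symm hj)
      · intro hi; exact absurd (Finset.mem_univ i) hi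
    rw [Finset.sum_congr rfl (fun i _ => e2 i)]
    exact htr
  have hρ : star x ⬝ᵥ (maxCoherent d *ᵥ x) = (d : ℂ) := by
    rw [quad_rho hd]
    simp only [hx]
    rw [Finset.sum_const, Finset.card_univ, Fintype.card_fin]
    simp only [nsmul_eq_mul, mul_one, star_natCast]
    rw [← mul_assoc, inv_mul_cancel₀ hdc, one_mul]
  rw [Matrix.sub_mulVec, dotProduct_sub, Matrix.smul_mulVec, dotProduct_smul,
    hσ, hρ, smul_eq_mul, mul_one] at h
  have e3 : ((l - d : ℝ) : ℂ) = (l : ℂ) - (d : ℂ) := by push_cast; ring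
  rw [← e3, Complex.zero_le_real] at h
  linarith

/-- The robustness of coherence of the `d`-dimensional maximally coherent state is
`d − 1`, equivalently `C_max(Ψ_d) = log₂ d`. -/
theorem cr_maxCoherent {d : ℕ} (hd : 0 < d) :
    CR (maxCoherent d) = (d : ℝ) - 1 ∧
    Real.logb 2 (1 + CR (maxCoherent d)) = Real.logb 2 d := by
  have hS : sInf {l : ℝ | ∃ σ : Matrix (Fin d) (Fin d) ℂ, IsDensity σ ∧ σ.IsDiag ∧
      ((l : ℂ) • σ - maxCoherent d).PosSemidef} = (d : ℝ) := by
    apply le_antisymm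
    · exact csInf_le ⟨(d:ℝ), fun l hl => lower_bound hd l hl⟩ (mem_S hd)
    · exact le_csInf ⟨(d:ℝ), mem_S hd⟩ (fun l hl => lower_bound hd l hl)
  unfold CR
  rw [hS]
  refine ⟨rfl, ?_⟩
  norm_num
end

section
/- The optimal discrimination probability over all POVMs equals that achievable by incoherent-operation discrimination channels: for any ensemble Ω = {(p_j, ρ_j)}_{j=0}^{k-1} of states on ℂ^d, max over POVMs {E_j} of Σ_j p_j tr(E_j ρ_j) equals the supremum over CPTP maps N ∈ IO (from ℂ^d to ℂ^k) of Σ_j p_j tr(N(ρ_j)|j⟩⟨j|). -/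
open Matrix ComplexOrder



/-- A POVM: positive semidefinite matrices summing to the identity. -/
def IsPOVM {n : Type*} [Fintype n] [DecidableEq n] {k : ℕ}
    (E : Fin k → Matrix n n ℂ) : Prop :=
  (∀ j, (E j).PosSemidef) ∧ ∑ j, E j = 1

/-- Incoherent operations: CPTP maps admitting a Kraus decomposition each of whose
Kraus operators maps diagonal matrices to diagonal matrices. -/
def IsIO {n m : Type*} [Fintype n] [DecidableEq n] [Fintype m] [DecidableEq m]
    (N : Matrix n n ℂ → Matrix m m ℂ) : Prop :=
  ∃ (r : ℕ) (K : Fin r → Matrix m n ℂ),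
    (∀ X, N X = ∑ i, K i * X * (K i)ᴴ) ∧ (∑ i, (K i)ᴴ * K i = 1) ∧
    (∀ i (A : Matrix n n ℂ), A.IsDiag → (K i * A * (K i)ᴴ).IsDiag)


-- aux lemmas
lemma sum_stdBasisMatrix_diag (k : ℕ) :
    (∑ j : Fin k, single j j (1 : ℂ)) = 1 := by
  ext a b
  simp only [Matrix.sum_apply, single, Matrix.of_apply, Matrix.one_apply]
  rw [Finset.sum_eq_single a]
  · by_cases h : a = b <;> simp [h]
  · intro c _ hc
    rw [if_neg]; exact fun h => hc h.1
  · simp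

lemma stdBasisMatrix_conjT {n m : Type*} [DecidableEq n] [DecidableEq m] (i : n) (j : m) :
    (single i j (1 : ℂ))ᴴ = single j i (1 : ℂ) := by
  ext a b
  simp [single, conjTranspose_apply, and_comm]

lemma stdBasisMatrix_isDiag {n : Type*} [DecidableEq n] (j : n) (c : ℂ) :
    (single j j c).IsDiag := by
  intro a b hab
  simp only [single, Matrix.of_apply]
  rw [if_neg]
  rintro ⟨rfl, rfl⟩; exact hab rfl

lemma sandwich {d k : ℕ} (j : Fin k) (m : Fin d) (B : Matrix (Fin d) (Fin d) ℂ) :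
    single j m (1 : ℂ) * B * single m j (1 : ℂ) =
      single j j (B m m) := by
  ext a b
  simp only [Matrix.mul_apply, single, Matrix.of_apply, boole_mul, mul_boole,
    ite_and]
  by_cases haj : j = a <;> by_cases hbj : j = b <;>
    simp [haj, hbj, Finset.sum_ite_eq, Finset.sum_ite_eq']

lemma stdBasisMatrix_mul_basis {a b c : Type*} [DecidableEq a] [DecidableEq b] [Fintype b]
    [DecidableEq c] (i : a) (j : b) (l : c) :
    single i j (1 : ℂ) * single j l (1 : ℂ) = single i l (1 : ℂ) := by
  ext x y
  simp only [Matrix.mul_apply, single, Matrix.of_apply, ite_and, boole_mul, mul_boole]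
  by_cases hx : i = x <;> by_cases hy : l = y <;>
    simp [hx, hy, Finset.sum_ite_eq, Finset.sum_ite_eq']

lemma posSemidef_sum {n : Type*} [Fintype n] [DecidableEq n] {ι : Type*} (s : Finset ι)
    (f : ι → Matrix n n ℂ) (h : ∀ i ∈ s, (f i).PosSemidef) :
    (∑ i ∈ s, f i).PosSemidef := by
  exact Finset.sum_induction f _ (fun a b ha hb => ha.add hb) Matrix.PosSemidef.zero h

open scoped MatrixOrder in
lemma psd_exists_sqrt {n : Type*} [Fintype n] [DecidableEq n] {A : Matrix n n ℂ}
    (hA : A.PosSemidef) : ∃ S : Matrix n n ℂ, Sᴴ = S ∧ S * S = A := by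
  obtain ⟨X, hX, -, hXX⟩ :=
    CFC.exists_sqrt_of_isSelfAdjoint_of_quasispectrumRestricts hA.isHermitian
      (QuasispectrumRestricts.nnreal_of_nonneg hA.nonneg)
  exact ⟨X, hX.star_eq, hXX⟩

/-- The optimal discrimination probability over unrestricted POVMs equals the optimal
discrimination probability achievable by incoherent-operation discrimination
channels followed by a computational-basis measurement. -/
theorem povm_discrimination_eq_io_discrimination {d k : ℕ}
    (p : Fin k → ℝ) (ρ : Fin k → Matrix (Fin d) (Fin d) ℂ)
    (hp : ∀ j, 0 ≤ p j) (hpsum : ∑ j, p j = 1) (hρ : ∀ j, IsDensity (ρ j)) :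
    sSup {x : ℝ | ∃ E : Fin k → Matrix (Fin d) (Fin d) ℂ, IsPOVM E ∧
        x = ∑ j, p j * ((E j * ρ j).trace.re)} =
    sSup {x : ℝ | ∃ N : Matrix (Fin d) (Fin d) ℂ → Matrix (Fin k) (Fin k) ℂ,
        IsIO N ∧
        x = ∑ j, p j * ((N (ρ j) * Matrix.single j j (1 : ℂ)).trace.re)} := by
  congr 1
  ext x
  constructor
  · rintro ⟨E, hE, rfl⟩
    set S : Fin k → Matrix (Fin d) (Fin d) ℂ := fun j => Classical.choose (psd_exists_sqrt (hE.1 j)) with hS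
    have hSH : ∀ j, (S j)ᴴ = S j := fun j => (Classical.choose_spec (psd_exists_sqrt (hE.1 j))).1
    have hSS : ∀ j, S j * S j = E j := fun j => (Classical.choose_spec (psd_exists_sqrt (hE.1 j))).2
    set e : Fin k × Fin d ≃ Fin (k * d) := finProdFinEquiv with he
    set K : Fin (k * d) → Matrix (Fin k) (Fin d) ℂ := fun i =>
      single (e.symm i).1 (e.symm i).2 (1 : ℂ) * S (e.symm i).1 with hK
    have hsumM : ∀ (f : Fin k × Fin d → Matrix (Fin k) (Fin k) ℂ),
        ∑ i : Fin (k * d), f (e.symm i) = ∑ q : Fin k × Fin d, f q :=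
      fun f => Equiv.sum_comp e.symm f
    have hsandK : ∀ (q : Fin k × Fin d) (X : Matrix (Fin d) (Fin d) ℂ),
        K (e q) * X * (K (e q))ᴴ =
          single q.1 q.1 ((S q.1 * X * S q.1) q.2 q.2) := by
      intro q X
      simp only [hK, Equiv.symm_apply_apply]
      rw [conjTranspose_mul, stdBasisMatrix_conjT, hSH]
      calc single q.1 q.2 (1:ℂ) * S q.1 * X * (S q.1 * single q.2 q.1 (1:ℂ))
          = single q.1 q.2 (1:ℂ) * (S q.1 * X * S q.1) * single q.2 q.1 (1:ℂ) := by
            simp only [Matrix.mul_assoc]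
        _ = single q.1 q.1 ((S q.1 * X * S q.1) q.2 q.2) := sandwich _ _ _
    have hsand : ∀ (i : Fin (k * d)) (X : Matrix (Fin d) (Fin d) ℂ),
        K i * X * (K i)ᴴ =
          single (e.symm i).1 (e.symm i).1
            ((S (e.symm i).1 * X * S (e.symm i).1) (e.symm i).2 (e.symm i).2) := by
      intro i X
      have := hsandK (e.symm i) X
      rwa [Equiv.apply_symm_apply] at this
    refine ⟨fun X => ∑ i, K i * X * (K i)ᴴ, ⟨k * d, K, fun X => rfl, ?_, ?_⟩, ?_⟩
    · -- trace preserving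
      have hterm : ∀ q : Fin k × Fin d,
          (K (e q))ᴴ * K (e q) = S q.1 * single q.2 q.2 (1:ℂ) * S q.1 := by
        intro q
        simp only [hK, Equiv.symm_apply_apply]
        rw [conjTranspose_mul, stdBasisMatrix_conjT, hSH]
        calc S q.1 * single q.2 q.1 (1:ℂ) * (single q.1 q.2 (1:ℂ) * S q.1)
            = S q.1 * (single q.2 q.1 (1:ℂ) * single q.1 q.2 (1:ℂ)) * S q.1 := by
              simp only [Matrix.mul_assoc]
          _ = S q.1 * single q.2 q.2 (1:ℂ) * S q.1 := by
              rw [stdBasisMatrix_mul_basis]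
      calc ∑ i, (K i)ᴴ * K i
          = ∑ q : Fin k × Fin d, (K (e q))ᴴ * K (e q) := (Equiv.sum_comp e _).symm
        _ = ∑ q : Fin k × Fin d, S q.1 * single q.2 q.2 (1:ℂ) * S q.1 := by
            exact Finset.sum_congr rfl fun q _ => hterm q
        _ = ∑ j : Fin k, S j * (∑ m : Fin d, single m m (1:ℂ)) * S j := by
            rw [Fintype.sum_prod_type]
            exact Finset.sum_congr rfl fun j _ => by
              simp only [Finset.mul_sum, Finset.sum_mul]
        _ = ∑ j : Fin k, E j := by
            refine Finset.sum_congr rfl fun j _ => ?_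
            rw [sum_stdBasisMatrix_diag, mul_one, hSS]
        _ = 1 := hE.2
    · -- incoherence
      intro i A _
      rw [hsand]
      exact stdBasisMatrix_isDiag _ _
    · -- equal values
      refine Finset.sum_congr rfl fun j _ => ?_
      congr 2
      show (E j * ρ j).trace
        = ((∑ i, K i * ρ j * (K i)ᴴ) * single j j (1:ℂ)).trace
      have hNj : (∑ i, K i * ρ j * (K i)ᴴ) =
          ∑ q : Fin k × Fin d,
            single q.1 q.1 ((S q.1 * ρ j * S q.1) q.2 q.2) := by
        rw [← Equiv.sum_comp e (fun i => K i * ρ j * (K i)ᴴ)]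
        exact Finset.sum_congr rfl fun q _ => hsandK q (ρ j)
      rw [hNj, Finset.sum_mul, trace_sum, Fintype.sum_prod_type]
      have hjj : ∀ j' : Fin k, ∀ m : Fin d,
          (single j' j' ((S j' * ρ j * S j') m m) * single j j (1:ℂ)).trace
            = if j' = j then (S j * ρ j * S j) m m else 0 := by
        intro j' m
        by_cases h : j' = j
        · subst h
          rw [single_mul_single_same, mul_one, trace_single_eq_same, if_pos rfl]
        · rw [single_mul_single_of_ne (h := h), Matrix.trace_zero, if_neg h]
      calc (E j * ρ j).trace = (S j * S j * ρ j).trace := by rw [hSS]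
        _ = (S j * ρ j * S j).trace := by
            rw [Matrix.trace_mul_cycle (S j) (ρ j) (S j)]
        _ = ∑ m : Fin d, (S j * ρ j * S j) m m := rfl
        _ = ∑ j' : Fin k, ∑ m : Fin d,
              (single j' j' ((S j' * ρ j * S j') m m)
                * single j j (1:ℂ)).trace := by
            rw [Finset.sum_comm]
            refine (Finset.sum_congr rfl fun m _ => ?_).symm
            rw [Finset.sum_congr rfl fun j' _ => hjj j' m, Finset.sum_ite_eq']
            simp
  · rintro ⟨N, ⟨r, K, hrep, hTP, _⟩, rfl⟩
    refine ⟨fun j => ∑ i, (K i)ᴴ * single j j (1:ℂ) * K i, ⟨?_, ?_⟩, ?_⟩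
    · intro j
      refine posSemidef_sum _ _ fun i _ => ?_
      have : (K i)ᴴ * single j j (1:ℂ) * K i
          = (single j j (1:ℂ) * K i)ᴴ * (single j j (1:ℂ) * K i) := by
        rw [conjTranspose_mul, stdBasisMatrix_conjT]
        calc (K i)ᴴ * single j j (1:ℂ) * K i
            = (K i)ᴴ * (single j j (1:ℂ) * single j j (1:ℂ)) * K i := by
              rw [single_mul_single_same, one_mul]
          _ = (K i)ᴴ * single j j (1:ℂ) * (single j j (1:ℂ) * K i) := by
              simp only [Matrix.mul_assoc]
      rw [this]
      exact posSemidef_conjTranspose_mul_self _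
    · have hcol : ∀ i, ∑ j : Fin k, (K i)ᴴ * single j j (1:ℂ) * K i = (K i)ᴴ * K i := by
        intro i
        rw [← Matrix.sum_mul, ← Matrix.mul_sum, sum_stdBasisMatrix_diag, Matrix.mul_one]
      rw [Finset.sum_comm]
      simp only [hcol]
      exact hTP
    · refine Finset.sum_congr rfl fun j _ => ?_
      congr 2
      rw [hrep, Finset.sum_mul, trace_sum, Finset.sum_mul, trace_sum]
      refine Finset.sum_congr rfl fun i _ => ?_
      have h1 : (K i)ᴴ * single j j (1:ℂ) * K i * ρ j
          = (K i)ᴴ * (single j j (1:ℂ) * K i * ρ j) := by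
        simp only [Matrix.mul_assoc]
      rw [h1, Matrix.trace_mul_comm ((K i)ᴴ), Matrix.trace_mul_comm (K i * ρ j * (K i)ᴴ)]
      congr 1
      simp only [Matrix.mul_assoc]
end

section
/- Ancillary coherence does not help DIO discrimination: for any ensemble {(p_j, ρ_j)} on ℂ^d and any ancilla density matrix σ on ℂ^m, the supremum of Σ_j p_j tr(N(ρ_j ⊗ σ)|j⟩⟨j|) over dephasing-covariant CPTP maps N : M_{dm}(ℂ) → M_k(ℂ) equals the supremum of Σ_j p_j tr(N'(ρ_j)|j⟩⟨j|) over dephasing-covariant CPTP maps N' : M_d(ℂ) → M_k(ℂ). -/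
open Matrix ComplexOrder Kronecker

/-- Completely positive trace-preserving maps, via Kraus decompositions. -/
def IsCPTP {n m : Type*} [Fintype n] [DecidableEq n] [Fintype m] [DecidableEq m]
    (N : Matrix n n ℂ → Matrix m m ℂ) : Prop :=
  ∃ (r : ℕ) (K : Fin r → Matrix m n ℂ),
    (∀ X, N X = ∑ i, K i * X * (K i)ᴴ) ∧ ∑ i, (K i)ᴴ * K i = 1

/-- Dephasing-covariant incoherent operations: CPTP maps commuting with dephasing. -/
def IsDIO {n m : Type*} [Fintype n] [DecidableEq n] [Fintype m] [DecidableEq m]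
    (N : Matrix n n ℂ → Matrix m m ℂ) : Prop :=
  IsCPTP N ∧ ∀ X, N (dephase X) = dephase (N X)

section Aux

variable {n m l : Type*} [Fintype n] [DecidableEq n] [Fintype m] [DecidableEq m]
  [Fintype l] [DecidableEq l]

lemma dephase_idem (A : Matrix n n ℂ) : dephase (dephase A) = dephase A := by
  ext i j; by_cases h : i = j <;> simp [dephase, h]

lemma dephase_kron (A : Matrix n n ℂ) (B : Matrix m m ℂ) :
    dephase (A ⊗ₖ B) = dephase A ⊗ₖ dephase B := by
  ext ⟨i, a⟩ ⟨j, b⟩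
  by_cases h1 : i = j <;> by_cases h2 : a = b <;>
    simp [dephase, kroneckerMap_apply, Prod.ext_iff, h1, h2]

lemma IsCPTP.comp {N : Matrix m m ℂ → Matrix l l ℂ} {M : Matrix n n ℂ → Matrix m m ℂ}
    (hN : IsCPTP N) (hM : IsCPTP M) : IsCPTP fun X => N (M X) := by
  obtain ⟨r, K, hK, hK1⟩ := hN
  obtain ⟨s, L, hL, hL1⟩ := hM
  refine ⟨r * s, fun i => K (finProdFinEquiv.symm i).1 * L (finProdFinEquiv.symm i).2, ?_, ?_⟩
  · intro X
    rw [← Equiv.sum_comp (finProdFinEquiv (m := r) (n := s))]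
    simp only [Equiv.symm_apply_apply]
    rw [Fintype.sum_prod_type, hK, hL]
    refine Finset.sum_congr rfl fun i _ => ?_
    rw [Matrix.mul_sum, Matrix.sum_mul]
    refine Finset.sum_congr rfl fun j _ => ?_
    rw [Matrix.conjTranspose_mul]
    simp only [Matrix.mul_assoc]
  · rw [← Equiv.sum_comp (finProdFinEquiv (m := r) (n := s))]
    simp only [Equiv.symm_apply_apply]
    rw [Fintype.sum_prod_type, Finset.sum_comm]
    have key : ∀ j, ∑ i, (K i * L j)ᴴ * (K i * L j) = (L j)ᴴ * L j := by
      intro j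
      have h1 : ∑ i, (K i * L j)ᴴ * (K i * L j) = (L j)ᴴ * (∑ i, (K i)ᴴ * K i) * L j := by
        rw [Matrix.mul_sum, Matrix.sum_mul]
        refine Finset.sum_congr rfl fun i _ => ?_
        rw [Matrix.conjTranspose_mul]
        simp only [Matrix.mul_assoc]
      rw [h1, hK1, Matrix.mul_one]
    simp_rw [key, hL1]

lemma trace_mul_std {k : ℕ} (A : Matrix (Fin k) (Fin k) ℂ) (j : Fin k) :
    (A * Matrix.single j j (1 : ℂ)).trace = A j j := by
  simp [Matrix.trace, Matrix.diag, Matrix.mul_apply, Matrix.single,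
    ite_and, Finset.sum_ite_eq, Finset.sum_ite_eq', eq_comm]

lemma diag_nonneg {σ : Matrix n n ℂ} (h : σ.PosSemidef) (a : n) : 0 ≤ σ a a := by
  exact h.diag_nonneg

lemma sqrt_sq {z : ℂ} (h : 0 ≤ z) : (Real.sqrt z.re : ℂ) * (Real.sqrt z.re) = z := by
  rw [Complex.nonneg_iff] at h
  rw [← Complex.ofReal_mul, Real.mul_self_sqrt h.1]
  exact Complex.ext rfl (by simp [h.2])

end Aux

/-- Partial trace over the second tensor factor. -/
noncomputable def ptr {d m : ℕ} (Y : Matrix (Fin d × Fin m) (Fin d × Fin m) ℂ) :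
    Matrix (Fin d) (Fin d) ℂ :=
  Matrix.of fun i j => ∑ a, Y (i, a) (j, a)

lemma ptr_dephase {d m : ℕ} (Y : Matrix (Fin d × Fin m) (Fin d × Fin m) ℂ) :
    ptr (dephase Y) = dephase (ptr Y) := by
  ext i j
  by_cases h : i = j <;> simp [ptr, dephase, h, Prod.ext_iff]

lemma ptr_kron {d m : ℕ} (A : Matrix (Fin d) (Fin d) ℂ) (B : Matrix (Fin m) (Fin m) ℂ)
    (hB : B.trace = 1) : ptr (A ⊗ₖ B) = A := by
  ext i j
  simp only [ptr, Matrix.of_apply, kroneckerMap_apply, ← Finset.mul_sum]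
  rw [show ∑ a, B a a = B.trace from rfl, hB, mul_one]

lemma ptr_cptp {d m : ℕ} : IsCPTP (ptr (d := d) (m := m)) := by
  refine ⟨m, fun a => Matrix.of fun i q => if i = q.1 ∧ a = q.2 then 1 else 0, ?_, ?_⟩
  · intro X
    ext i j
    simp only [Matrix.sum_apply, Matrix.mul_apply, Matrix.conjTranspose_apply,
      Matrix.of_apply, ptr]
    simp [ite_and, Finset.sum_ite_eq, Finset.sum_ite_eq', Finset.mul_sum, Finset.sum_mul,
      apply_ite, Fintype.sum_prod_type]
  · ext ⟨i, a⟩ ⟨j, b⟩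
    simp only [Matrix.sum_apply, Matrix.mul_apply, Matrix.conjTranspose_apply, Matrix.of_apply]
    by_cases h1 : i = j <;> by_cases h2 : a = b <;>
      simp [Matrix.one_apply, Prod.ext_iff, h1, h2, ite_and, Finset.sum_ite_eq,
        Finset.sum_ite_eq', apply_ite] <;> simp_all [eq_comm]

/-- Tensoring with a fixed diagonal density matrix is CPTP. -/
lemma kron_diag_cptp {d m : ℕ} (σ : Matrix (Fin m) (Fin m) ℂ) (hσ : IsDensity σ) :
    IsCPTP (fun X : Matrix (Fin d) (Fin d) ℂ => X ⊗ₖ dephase σ) := by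
  refine ⟨m, fun a => Matrix.of fun q i =>
      if q.1 = i ∧ q.2 = a then (Real.sqrt (σ a a).re : ℂ) else 0, ?_, ?_⟩
  · intro X
    ext ⟨i, b⟩ ⟨i', b'⟩
    simp only [Matrix.sum_apply, Matrix.mul_apply, Matrix.conjTranspose_apply,
      Matrix.of_apply, kroneckerMap_apply, dephase, Fintype.sum_prod_type]
    by_cases h : b = b'
    · subst h
      rw [Finset.sum_eq_single b (by intro c _ hc; simp [hc, Ne.symm hc]) (by simp)]
      simp [ite_and, Finset.sum_ite_eq, Finset.sum_ite_eq', apply_ite, Finset.mul_sum,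
        Finset.sum_mul, mul_comm, mul_left_comm]
      rw [sqrt_sq (diag_nonneg hσ.1 b)]; ring
    · rw [if_neg h, mul_zero]
      symm
      apply Finset.sum_eq_zero
      intro c _
      apply Finset.sum_eq_zero
      intro e _
      by_cases hb : b = c <;> by_cases hb' : b' = c <;> simp_all [ite_and, apply_ite]
  · ext i i'
    simp only [Matrix.sum_apply, Matrix.mul_apply, Matrix.conjTranspose_apply,
      Matrix.of_apply, Fintype.sum_prod_type]
    by_cases h : i = i'
    · subst h
      simp [ite_and, Finset.sum_ite_eq, Finset.sum_ite_eq', apply_ite, Matrix.one_apply]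
      rw [show (∑ x : Fin m, ((Real.sqrt (σ x x).re : ℂ)) * (Real.sqrt (σ x x).re : ℂ)) = ∑ x, σ x x from
        Finset.sum_congr rfl fun a _ => sqrt_sq (diag_nonneg hσ.1 a)]
      exact hσ.2
    · rw [Finset.sum_eq_zero, eq_comm]
      · simp [Matrix.one_apply, h]
      · intro a _
        rw [Finset.sum_eq_zero]
        intro c _
        by_cases hc : c = i <;> by_cases hc' : c = i' <;> simp_all

/-- Ancillary coherence does not help DIO discrimination: the optimal discrimination
probability over DIO channels acting on `ρⱼ ⊗ σ` (with any fixed ancilla state `σ`)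
equals the optimal discrimination probability over DIO channels acting on `ρⱼ` alone. -/
theorem dio_discrimination_ancilla_useless {d m k : ℕ}
    (p : Fin k → ℝ) (ρ : Fin k → Matrix (Fin d) (Fin d) ℂ)
    (hp : ∀ j, 0 ≤ p j) (hpsum : ∑ j, p j = 1) (hρ : ∀ j, IsDensity (ρ j))
    (σ : Matrix (Fin m) (Fin m) ℂ) (hσ : IsDensity σ) :
    sSup {x : ℝ | ∃ N : Matrix (Fin d × Fin m) (Fin d × Fin m) ℂ →
          Matrix (Fin k) (Fin k) ℂ, IsDIO N ∧
        x = ∑ j, p j * ((N (ρ j ⊗ₖ σ) * Matrix.single j j (1 : ℂ)).trace.re)} =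
    sSup {x : ℝ | ∃ N' : Matrix (Fin d) (Fin d) ℂ → Matrix (Fin k) (Fin k) ℂ,
        IsDIO N' ∧
        x = ∑ j, p j * ((N' (ρ j) * Matrix.single j j (1 : ℂ)).trace.re)} := by
  congr 1
  ext x
  simp only [Set.mem_setOf_eq]
  constructor
  · rintro ⟨N, hN, rfl⟩
    refine ⟨fun X => N (X ⊗ₖ dephase σ), ⟨hN.1.comp (kron_diag_cptp σ hσ), ?_⟩, ?_⟩
    · intro X
      show N (dephase X ⊗ₖ dephase σ) = dephase (N (X ⊗ₖ dephase σ))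
      have hd : dephase X ⊗ₖ dephase σ = dephase (X ⊗ₖ dephase σ) := by
        rw [dephase_kron, dephase_idem]
      rw [hd, hN.2]
    · refine Finset.sum_congr rfl fun j _ => ?_
      congr 2
      show (N (ρ j ⊗ₖ σ) * Matrix.single j j (1 : ℂ)).trace =
        (N (ρ j ⊗ₖ dephase σ) * Matrix.single j j (1 : ℂ)).trace
      rw [trace_mul_std, trace_mul_std]
      have h1 : N (ρ j ⊗ₖ σ) j j = N (dephase (ρ j ⊗ₖ σ)) j j := by
        rw [hN.2]; simp [dephase]
      have h2 : N (ρ j ⊗ₖ dephase σ) j j = N (dephase (ρ j ⊗ₖ dephase σ)) j j := by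
        rw [hN.2]; simp [dephase]
      rw [h1, h2, dephase_kron, dephase_kron, dephase_idem]
  · rintro ⟨N', hN', rfl⟩
    refine ⟨fun Y => N' (ptr Y), ⟨hN'.1.comp ptr_cptp, ?_⟩, ?_⟩
    · intro Y
      show N' (ptr (dephase Y)) = dephase (N' (ptr Y))
      rw [ptr_dephase, hN'.2]
    · refine Finset.sum_congr rfl fun j _ => ?_
      show p j * ((N' (ρ j) * Matrix.single j j (1 : ℂ)).trace.re) =
        p j * ((N' (ptr (ρ j ⊗ₖ σ)) * Matrix.single j j (1 : ℂ)).trace.re)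
      rw [ptr_kron _ _ hσ.2]
end
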